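/- Let S be the group with presentation on generators t₁, t₀, a, v and defining relations: t₀a = at₀, v t₀ = t₀^{-1} v, v² a = a v², t₁ v = v t₁, t₁ t₀ = t₀ t₁, t₁ a = a t₁. Let H be the subgroup generated by t₀, t₁ and v². Then H is a normal subgroup of S and the quotient S/H is isomorphic to the free product ℤ * ℤ/2ℤ, where the images of a and v generate the ℤ and ℤ/2ℤ factors respectively. -/

import Mathlib

open Monoid FreeGroup

/-- Generators: 0 = t₁, 1 = t₀, 2 = a, 3 = v. -/
def stmt11Rels : Set (FreeGroup (Fin 4)) :=
  { of 1 * of 2 * (of 2 * of 1)⁻¹,               -- t₀a = at₀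
    of 3 * of 1 * ((of 1)⁻¹ * of 3)⁻¹,           -- vt₀ = t₀⁻¹v
    (of 3) ^ 2 * of 2 * (of 2 * (of 3) ^ 2)⁻¹,   -- v²a = av²
    of 0 * of 3 * (of 3 * of 0)⁻¹,               -- t₁v = vt₁
    of 0 * of 1 * (of 1 * of 0)⁻¹,               -- t₁t₀ = t₀t₁
    of 0 * of 2 * (of 2 * of 0)⁻¹ }              -- t₁a = at₁

/-!
Conjugation by each generator of `S` sends `t₀`, `t₁` and `v²` into `H`: `v` inverts `t₀`, and
every other such pair commutes (`v²` commutes with `t₀` because `v` inverts it twice). Hence `H`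
is normal. Killing `t₀`, `t₁` and `v²` leaves the relations of `⟨a, v | v² = 1⟩ ≅ ℤ ∗ ℤ/2`:
the map `S → ℤ ∗ ℤ/2` with `t₀, t₁ ↦ 1` and `a`, `v` going to the two generators vanishes on `H`,
and the induced map `S/H → ℤ ∗ ℤ/2` is inverted by sending the generators back to `a` and `v`.
-/

namespace Subgroup

variable {G : Type*} [Group G] {s : Set G}

theorem mem_normalizer_closure_of_conj_mem {x : G} (h₁ : ∀ g ∈ s, x * g * x⁻¹ ∈ closure s)
    (h₂ : ∀ g ∈ s, x⁻¹ * g * x ∈ closure s) : x ∈ normalizer (closure s : Set G) := by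
  rw [mem_normalizer_iff_map_conj_eq, MonoidHom.map_closure]
  refine le_antisymm ((closure_le _).mpr ?_) ((closure_le _).mpr fun g hg ↦ ?_)
  · rintro _ ⟨g, hg, rfl⟩
    exact h₁ g hg
  · rw [← MonoidHom.map_closure]
    exact ⟨_, h₂ g hg, by simp [mul_assoc]⟩

theorem normal_closure_of_conj_mem {X : Set G} (hX : closure X = ⊤)
    (h : ∀ x ∈ X, ∀ g ∈ s, x * g * x⁻¹ ∈ closure s ∧ x⁻¹ * g * x ∈ closure s) :
    (closure s).Normal := by
  rw [← normalizer_eq_top_iff, eq_top_iff, ← hX, closure_le]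
  exact fun x hx ↦ mem_normalizer_closure_of_conj_mem (fun g hg ↦ (h x hx g hg).1)
    (fun g hg ↦ (h x hx g hg).2)

theorem conj_mem_closure_of_commute {x g : G} (hg : g ∈ s) (hc : Commute x g) :
    x * g * x⁻¹ ∈ closure s ∧ x⁻¹ * g * x ∈ closure s := by
  rw [hc.mul_inv_cancel, hc.inv_mul_cancel]
  exact ⟨subset_closure hg, subset_closure hg⟩

end Subgroup

def zmodPowersHom {G : Type*} [Group G] (n : ℕ) (g : G) (hg : g ^ n = 1) :
    Multiplicative (ZMod n) →* G :=
  AddMonoidHom.toMultiplicativeLeft <|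
    ZMod.lift n ⟨zmultiplesHom (Additive G) (Additive.ofMul g), by
      simp only [zmultiplesHom_apply, natCast_zsmul, ← ofMul_pow, hg, ofMul_one]⟩

@[simp]
theorem zmodPowersHom_ofAdd_one {G : Type*} [Group G] (n : ℕ) (g : G) (hg : g ^ n = 1) :
    zmodPowersHom n g hg (Multiplicative.ofAdd 1) = g := by
  rw [← Int.cast_one (R := ZMod n)]
  simp only [zmodPowersHom, AddMonoidHom.coe_toMultiplicativeLeft, Function.comp_apply,
    toAdd_ofAdd, ZMod.lift_coe, zmultiplesHom_apply, one_zsmul, toMul_ofMul]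

theorem MonoidHom.ext_mzmod {n : ℕ} {M : Type*} [Monoid M]
    {f g : Multiplicative (ZMod n) →* M} (h : f (.ofAdd 1) = g (.ofAdd 1)) : f = g := by
  have hs : Function.Surjective (AddMonoidHom.toMultiplicative (Int.castAddHom (ZMod n))) :=
    fun x ↦ ⟨.ofAdd (ZMod.intCast_surjective x.toAdd).choose,
      congrArg Multiplicative.ofAdd (ZMod.intCast_surjective x.toAdd).choose_spec⟩
  exact (MonoidHom.cancel_right hs).mp (MonoidHom.ext_mint (by simpa using h))

namespace StabilizerGroup

abbrev S := PresentedGroup stmt11Rels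

abbrev t₁ : S := PresentedGroup.of 0
abbrev t₀ : S := PresentedGroup.of 1
abbrev a : S := PresentedGroup.of 2
abbrev v : S := PresentedGroup.of 3

theorem commute_t₀_a : Commute t₀ a :=
  PresentedGroup.mk_eq_mk_of_mul_inv_mem (by simp [stmt11Rels])

theorem v_mul_t₀ : v * t₀ = t₀⁻¹ * v :=
  PresentedGroup.mk_eq_mk_of_mul_inv_mem (by simp [stmt11Rels])

theorem commute_v_sq_a : Commute (v ^ 2) a :=
  PresentedGroup.mk_eq_mk_of_mul_inv_mem (by simp [stmt11Rels])

theorem commute_t₁_v : Commute t₁ v :=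
  PresentedGroup.mk_eq_mk_of_mul_inv_mem (by simp [stmt11Rels])

theorem commute_t₁_t₀ : Commute t₁ t₀ :=
  PresentedGroup.mk_eq_mk_of_mul_inv_mem (by simp [stmt11Rels])

theorem commute_t₁_a : Commute t₁ a :=
  PresentedGroup.mk_eq_mk_of_mul_inv_mem (by simp [stmt11Rels])

theorem v_conj_t₀ : v * t₀ * v⁻¹ = t₀⁻¹ := by
  rw [v_mul_t₀, mul_inv_cancel_right]

theorem v_inv_conj_t₀ : v⁻¹ * t₀ * v = t₀⁻¹ := by
  calc v⁻¹ * t₀ * v = v⁻¹ * (v * t₀ * v⁻¹)⁻¹ * v := by rw [v_conj_t₀, inv_inv]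
    _ = t₀⁻¹ := by group

theorem commute_v_sq_t₀ : Commute (v ^ 2) t₀ := by
  have h : v * t₀⁻¹ * v⁻¹ = t₀ := by simpa [mul_assoc] using congrArg (·⁻¹) v_conj_t₀
  calc v ^ 2 * t₀ = v * (v * t₀ * v⁻¹) * v⁻¹ * v ^ 2 := by simp [sq, mul_assoc]
    _ = t₀ * v ^ 2 := by rw [v_conj_t₀, h]

abbrev H : Subgroup S := Subgroup.closure {t₀, t₁, v ^ 2}

open Subgroup in
instance normal_H : H.Normal := by
  refine normal_closure_of_conj_mem (PresentedGroup.closure_range_of _) ?_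
  rintro _ ⟨j, rfl⟩ g hg
  have ht₀ : t₀ ∈ H := subset_closure (by simp)
  fin_cases j <;> rcases hg with rfl | rfl | rfl
  · exact conj_mem_closure_of_commute (by simp) commute_t₁_t₀
  · exact conj_mem_closure_of_commute (by simp) (Commute.refl t₁)
  · exact conj_mem_closure_of_commute (by simp) (commute_t₁_v.pow_right 2)
  · exact conj_mem_closure_of_commute (by simp) (Commute.refl t₀)
  · exact conj_mem_closure_of_commute (by simp) commute_t₁_t₀.symm
  · exact conj_mem_closure_of_commute (by simp) commute_v_sq_t₀.symm
  · exact conj_mem_closure_of_commute (by simp) commute_t₀_a.symm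
  · exact conj_mem_closure_of_commute (by simp) commute_t₁_a.symm
  · exact conj_mem_closure_of_commute (by simp) commute_v_sq_a.symm
  · show v * t₀ * v⁻¹ ∈ H ∧ v⁻¹ * t₀ * v ∈ H
    rw [v_conj_t₀, v_inv_conj_t₀]
    exact ⟨inv_mem ht₀, inv_mem ht₀⟩
  · exact conj_mem_closure_of_commute (by simp) commute_t₁_v.symm
  · exact conj_mem_closure_of_commute (by simp) ((Commute.refl v).pow_right 2)

abbrev IntCoprodZModTwo := Coprod (Multiplicative ℤ) (Multiplicative (ZMod 2))

def toCoprodOfGen : Fin 4 → IntCoprodZModTwo :=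
  ![1, 1, Coprod.inl (.ofAdd 1), Coprod.inr (.ofAdd 1)]

theorem inr_ofAdd_one_sq : (Coprod.inr (.ofAdd 1) : IntCoprodZModTwo) ^ 2 = 1 := by
  rw [← map_pow, show (Multiplicative.ofAdd (1 : ZMod 2)) ^ 2 = 1 from rfl, _root_.map_one]

theorem lift_toCoprodOfGen_rels : ∀ r ∈ stmt11Rels, FreeGroup.lift toCoprodOfGen r = 1 := by
  rintro r (rfl | rfl | rfl | rfl | rfl | rfl) <;>
    simp [toCoprodOfGen, inr_ofAdd_one_sq]

def toCoprod : S →* IntCoprodZModTwo := PresentedGroup.toGroup lift_toCoprodOfGen_rels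

theorem toCoprod_of (i : Fin 4) : toCoprod (PresentedGroup.of i) = toCoprodOfGen i :=
  PresentedGroup.toGroup.of lift_toCoprodOfGen_rels

theorem H_le_ker_toCoprod : H ≤ toCoprod.ker := by
  rw [Subgroup.closure_le]
  rintro _ (rfl | rfl | rfl) <;> simp [toCoprod_of, toCoprodOfGen, inr_ofAdd_one_sq]

def quotientToCoprod : S ⧸ H →* IntCoprodZModTwo := QuotientGroup.lift H toCoprod H_le_ker_toCoprod

@[simp]
theorem mk_t₀ : (t₀ : S ⧸ H) = 1 :=
  (QuotientGroup.eq_one_iff _).mpr (Subgroup.subset_closure (by simp))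

@[simp]
theorem mk_t₁ : (t₁ : S ⧸ H) = 1 :=
  (QuotientGroup.eq_one_iff _).mpr (Subgroup.subset_closure (by simp))

theorem mk_v_sq : (v : S ⧸ H) ^ 2 = 1 :=
  (QuotientGroup.eq_one_iff _).mpr (Subgroup.subset_closure (by simp))

def coprodToQuotient : IntCoprodZModTwo →* S ⧸ H :=
  Coprod.lift (zpowersHom _ (a : S ⧸ H)) (zmodPowersHom 2 (v : S ⧸ H) mk_v_sq)

theorem coprodToQuotient_comp_quotientToCoprod :
    coprodToQuotient.comp quotientToCoprod = MonoidHom.id _ := by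
  refine QuotientGroup.monoidHom_ext H (PresentedGroup.ext fun i ↦ ?_)
  fin_cases i <;> simp [quotientToCoprod, coprodToQuotient, toCoprod_of, toCoprodOfGen]

theorem quotientToCoprod_comp_coprodToQuotient :
    quotientToCoprod.comp coprodToQuotient = MonoidHom.id _ := by
  refine Coprod.hom_ext (MonoidHom.ext_mint ?_) (MonoidHom.ext_mzmod ?_) <;>
    simp [quotientToCoprod, coprodToQuotient, toCoprod_of, toCoprodOfGen]

def quotientEquivCoprod : S ⧸ H ≃* IntCoprodZModTwo :=
  MonoidHom.toMulEquiv quotientToCoprod coprodToQuotient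
    coprodToQuotient_comp_quotientToCoprod quotientToCoprod_comp_coprodToQuotient

theorem toCoprod_eq_comp_mk : toCoprod = quotientToCoprod.comp (QuotientGroup.mk' H) :=
  rfl

theorem toCoprod_surjective : Function.Surjective toCoprod := by
  rw [toCoprod_eq_comp_mk]
  exact quotientEquivCoprod.surjective.comp (QuotientGroup.mk'_surjective H)

theorem ker_toCoprod : toCoprod.ker = H := by
  rw [toCoprod_eq_comp_mk, MonoidHom.ker_comp_of_injective _ _ quotientEquivCoprod.injective,
    QuotientGroup.ker_mk']

end StabilizerGroup

/-- In the presented group S = ⟨t₁,t₀,a,v | …⟩, the subgroup H = ⟨t₀,t₁,v²⟩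
is normal and S/H ≅ ℤ ∗ ℤ/2ℤ, with the images of a and v generating the
ℤ and ℤ/2ℤ factors respectively (expressed via a surjection with kernel H). -/
theorem stmt_11 :
    (Subgroup.closure {PresentedGroup.of (rels := stmt11Rels) 1,
        PresentedGroup.of (rels := stmt11Rels) 0,
        (PresentedGroup.of (rels := stmt11Rels) 3) ^ 2}).Normal ∧
    ∃ π : PresentedGroup stmt11Rels →*
        Monoid.Coprod (Multiplicative ℤ) (Multiplicative (ZMod 2)),
      Function.Surjective π ∧
      π.ker = Subgroup.closure {PresentedGroup.of (rels := stmt11Rels) 1,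
        PresentedGroup.of (rels := stmt11Rels) 0,
        (PresentedGroup.of (rels := stmt11Rels) 3) ^ 2} ∧
      π (PresentedGroup.of 2) = Monoid.Coprod.inl (Multiplicative.ofAdd (1 : ℤ)) ∧
      π (PresentedGroup.of 3) = Monoid.Coprod.inr (Multiplicative.ofAdd (1 : ZMod 2)) :=
  ⟨StabilizerGroup.normal_H, StabilizerGroup.toCoprod, StabilizerGroup.toCoprod_surjective,
    StabilizerGroup.ker_toCoprod, StabilizerGroup.toCoprod_of 2, StabilizerGroup.toCoprod_of 3⟩
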